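/- The dimension over ℚ of ker(γ) equals the number of connected components of Γ that are in equilibrium. -/

import Mathlib

/-- The defining property of the incidence matrix of a multiquiver: every row has
at most one positive and at most one negative entry. -/
def CondM {V E : Type*} (γ : E → V → ℤ) : Prop :=
  ∀ e : E, (∀ v w : V, 0 < γ e v → 0 < γ e w → v = w) ∧
    (∀ v w : V, γ e v < 0 → γ e w < 0 → v = w)

/-- Two vertices are adjacent if they are distinct and some edge is incident to
both of them. -/
def MQAdj {V E : Type*} (γ : E → V → ℤ) (v w : V) : Prop :=
  v ≠ w ∧ ∃ e : E, γ e v ≠ 0 ∧ γ e w ≠ 0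

/-- The multiquiver is connected if any two vertices are related by the
reflexive–transitive closure of adjacency. -/
def MQConnected {V E : Type*} (γ : E → V → ℤ) : Prop :=
  ∀ v w : V, Relation.ReflTransGen (MQAdj γ) v w

/-- The kernel of the incidence matrix `γ`, as a `ℚ`-subspace of `V → ℚ`:
`{d | ∀ e, Σ_v γ e v · d v = 0}`. -/
def kerGamma {V E : Type*} [Fintype V] (γ : E → V → ℤ) : Submodule ℚ (V → ℚ) where
  carrier := {d | ∀ e : E, ∑ v : V, (γ e v : ℚ) * d v = 0}
  add_mem' := by
    intro a b ha hb e
    have : ∑ v : V, (γ e v : ℚ) * (a v + b v)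
        = (∑ v : V, (γ e v : ℚ) * a v) + ∑ v : V, (γ e v : ℚ) * b v := by
      rw [← Finset.sum_add_distrib]
      exact Finset.sum_congr rfl fun v _ => by ring
    simpa [this] using by rw [ha e, hb e, add_zero]
  zero_mem' := by intro e; simp
  smul_mem' := by
    intro c a ha e
    have : ∑ v : V, (γ e v : ℚ) * (c * a v) = c * ∑ v : V, (γ e v : ℚ) * a v := by
      rw [Finset.mul_sum]
      exact Finset.sum_congr rfl fun v _ => by ring
    simp only [Pi.smul_apply, smul_eq_mul]
    rw [this, ha e, mul_zero]

/-- A (not necessarily directed) cycle in the multiquiver with incidence matrix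
`γ`: `n ≥ 2` distinct vertices `v i` and distinct edges `e i`, with `e i`
incident to `v i` and `v (i+1)` (indices mod `n`). -/
structure MQCycle {V E : Type*} (γ : E → V → ℤ) where
  n : ℕ
  hn : 2 ≤ n
  v : ZMod n → V
  e : ZMod n → E
  hv : Function.Injective v
  he : Function.Injective e
  h1 : ∀ i, γ (e i) (v i) ≠ 0
  h2 : ∀ i, γ (e i) (v (i + 1)) ≠ 0

/-- A cycle is balanced if the product of the multiplicities at its sources
equals the product of the multiplicities at its targets. -/
def MQCycle.Balanced {V E : Type*} {γ : E → V → ℤ} (c : MQCycle γ) : Prop :=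
  haveI : NeZero c.n := ⟨by have := c.hn; omega⟩
  ∏ i : ZMod c.n, (γ (c.e i) (c.v i)).natAbs = ∏ i : ZMod c.n, (γ (c.e i) (c.v (i + 1))).natAbs

/-- The setoid on vertices whose classes are the connected components. -/
def mqSetoid {V E : Type*} (γ : E → V → ℤ) : Setoid V :=
  ⟨Relation.EqvGen (MQAdj γ), Relation.EqvGen.is_equivalence _⟩

/-- The edge `e` is a leaf at the component `C`: exactly one vertex is incident
to `e`, and that vertex lies in `C`. -/
def LeafAt {V E : Type*} (γ : E → V → ℤ) (C : Quotient (mqSetoid γ)) (e : E) : Prop :=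
  (∃! v : V, γ e v ≠ 0) ∧ ∀ v : V, γ e v ≠ 0 → Quotient.mk (mqSetoid γ) v = C

/-- A connected component is in equilibrium if no edge is a leaf at it and every
cycle all of whose vertices lie in it is balanced. -/
def InEquilibrium {V E : Type*} (γ : E → V → ℤ) (C : Quotient (mqSetoid γ)) : Prop :=
  (∀ e : E, ¬ LeafAt γ C e) ∧
    ∀ c : MQCycle γ, (∀ i, Quotient.mk (mqSetoid γ) (c.v i) = C) → c.Balanced

/-!
A kernel vector `d` satisfies `|γ e v| d v = |γ e w| d w` along every edge `e` joining `v ≠ w`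
(its two nonzero entries have opposite signs) and vanishes at the vertex of a leaf. So on a
connected component `d` is determined by one value, and it vanishes on a component with a leaf,
or with an unbalanced cycle (multiply the relations around the cycle). Conversely, on a component
in equilibrium the product of the ratios `|γ e v| / |γ e w|` along any closed walk is `1`:
erasing loops reduces a closed walk to closed walks through distinct vertices, and each of these
is a balanced cycle or runs back and forth along one edge. Transporting the value `1` from a
base point along walks then gives a kernel vector supported on the component. Hence evaluation
at base points is an isomorphism from `ker γ` onto the functions on the components in
equilibrium.
-/

section Incidence

variable {V E : Type*} {γ : E → V → ℤ}

theorem CondM.eq_or_eq_of_ne_zero (hM : CondM γ) {e : E} {v w u : V} (hv : γ e v ≠ 0)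
    (hw : γ e w ≠ 0) (hvw : v ≠ w) (hu : γ e u ≠ 0) : u = v ∨ u = w := by
  obtain ⟨hpos, hneg⟩ := hM e
  rcases hu.lt_or_gt with hu | hu <;> rcases hv.lt_or_gt with hv | hv <;>
    rcases hw.lt_or_gt with hw | hw <;>
    first
    | exact .inl (hneg _ _ hu hv) | exact .inl (hpos _ _ hu hv)
    | exact .inr (hneg _ _ hu hw) | exact .inr (hpos _ _ hu hw)
    | exact absurd (hneg _ _ hv hw) hvw | exact absurd (hpos _ _ hv hw) hvw

theorem CondM.mul_neg (hM : CondM γ) {e : E} {v w : V} (hv : γ e v ≠ 0) (hw : γ e w ≠ 0)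
    (hvw : v ≠ w) : γ e v * γ e w < 0 := by
  rcases hv.lt_or_gt with hv | hv <;> rcases hw.lt_or_gt with hw | hw
  · exact absurd ((hM e).2 v w hv hw) hvw
  · exact mul_neg_of_neg_of_pos hv hw
  · exact mul_neg_of_pos_of_neg hv hw
  · exact absurd ((hM e).1 v w hv hw) hvw

end Incidence

theorem add_mul_eq_zero_iff_abs_mul_eq {K : Type*} [Field K] [LinearOrder K]
    [IsStrictOrderedRing K] {a b : K} (hab : a * b < 0) (x y : K) :
    a * x + b * y = 0 ↔ |a| * x = |b| * y := by
  rcases mul_neg_iff.mp hab with ⟨ha, hb⟩ | ⟨ha, hb⟩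
  · rw [abs_of_pos ha, abs_of_neg hb]; constructor <;> intro h <;> linarith
  · rw [abs_of_neg ha, abs_of_pos hb]; constructor <;> intro h <;> linarith

structure MQDart {V E : Type*} (γ : E → V → ℤ) where
  edge : E
  src : V
  tgt : V
  src_ne_tgt : src ≠ tgt
  ne_zero_src : γ edge src ≠ 0
  ne_zero_tgt : γ edge tgt ≠ 0

namespace MQDart

variable {V E : Type*} {γ : E → V → ℤ}

theorem adj (δ : MQDart γ) : MQAdj γ δ.src δ.tgt :=
  ⟨δ.src_ne_tgt, δ.edge, δ.ne_zero_src, δ.ne_zero_tgt⟩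

def symm (δ : MQDart γ) : MQDart γ :=
  ⟨δ.edge, δ.tgt, δ.src, δ.src_ne_tgt.symm, δ.ne_zero_tgt, δ.ne_zero_src⟩

/-- The factor by which a kernel vector is multiplied when crossing `δ`. -/
noncomputable def weight (δ : MQDart γ) : ℚ :=
  |(γ δ.edge δ.src : ℚ)| / |(γ δ.edge δ.tgt : ℚ)|

theorem weight_symm (δ : MQDart γ) : δ.symm.weight = δ.weight⁻¹ :=
  (inv_div _ _).symm

theorem prod_weight_reverse_symm (l : List (MQDart γ)) :
    ((l.reverse.map symm).map weight).prod = (l.map weight).prod⁻¹ := by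
  induction l with
  | nil => simp
  | cons δ l ih =>
    rw [List.reverse_cons, List.map_append, List.map_append, List.prod_append, ih]
    simp [weight_symm, mul_comm]

theorem sum_eq_add (hM : CondM γ) [Fintype V] (δ : MQDart γ) (d : V → ℚ) :
    ∑ u, (γ δ.edge u : ℚ) * d u =
      γ δ.edge δ.src * d δ.src + γ δ.edge δ.tgt * d δ.tgt := by
  classical
  rw [← Finset.sum_pair (f := fun u => (γ δ.edge u : ℚ) * d u) δ.src_ne_tgt]
  refine (Finset.sum_subset (Finset.subset_univ _) fun u _ hu => ?_).symm
  have : γ δ.edge u = 0 := by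
    by_contra h
    rcases hM.eq_or_eq_of_ne_zero δ.ne_zero_src δ.ne_zero_tgt δ.src_ne_tgt h with rfl | rfl <;>
      simp at hu
  simp [this]

theorem sum_eq_zero_iff (hM : CondM γ) [Fintype V] (δ : MQDart γ) (d : V → ℚ) :
    ∑ u, (γ δ.edge u : ℚ) * d u = 0 ↔ d δ.tgt = δ.weight * d δ.src := by
  have hneg : (γ δ.edge δ.src : ℚ) * γ δ.edge δ.tgt < 0 := by
    exact_mod_cast hM.mul_neg δ.ne_zero_src δ.ne_zero_tgt δ.src_ne_tgt
  have htgt : |(γ δ.edge δ.tgt : ℚ)| ≠ 0 := by simpa using δ.ne_zero_tgt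
  rw [sum_eq_add hM, add_mul_eq_zero_iff_abs_mul_eq hneg, weight, div_mul_eq_mul_div,
    eq_div_iff htgt]
  constructor <;> intro h <;> linarith

end MQDart

section KernelMembership

variable {V E : Type*} [Fintype V] {γ : E → V → ℤ}

theorem sum_eq_of_forall_ne_zero_eq {e : E} {v : V}
    (hv : ∀ u, γ e u ≠ 0 → u = v) (d : V → ℚ) :
    ∑ u, (γ e u : ℚ) * d u = γ e v * d v :=
  Finset.sum_eq_single v
    (fun u _ hu => by
      rw [show γ e u = 0 from by_contra fun h => hu (hv u h), Int.cast_zero, zero_mul])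
    (by simp)

theorem mem_kerGamma_iff (hM : CondM γ) {d : V → ℚ} :
    d ∈ kerGamma γ ↔
      (∀ e v, γ e v ≠ 0 → (∀ u, γ e u ≠ 0 → u = v) → d v = 0) ∧
        ∀ δ : MQDart γ, d δ.tgt = δ.weight * d δ.src := by
  refine ⟨fun hd => ⟨fun e v hv hleaf => ?_,
    fun δ => (δ.sum_eq_zero_iff hM d).1 (hd δ.edge)⟩,
    fun ⟨hleaf, hdart⟩ e => ?_⟩
  · have := hd e
    rw [sum_eq_of_forall_ne_zero_eq hleaf] at this
    exact (mul_eq_zero.1 this).resolve_left (by exact_mod_cast hv)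
  · by_cases hsupp : ∃ v, γ e v ≠ 0
    · obtain ⟨v, hv⟩ := hsupp
      by_cases hv' : ∀ u, γ e u ≠ 0 → u = v
      · rw [sum_eq_of_forall_ne_zero_eq hv', hleaf e v hv hv', mul_zero]
      · push Not at hv'
        obtain ⟨w, hw, hwv⟩ := hv'
        exact (MQDart.sum_eq_zero_iff hM ⟨e, v, w, hwv.symm, hv, hw⟩ d).2 (hdart _)
    · push Not at hsupp
      simp [hsupp]

end KernelMembership

section Walks

variable {V E : Type*} {γ : E → V → ℤ}

inductive IsMQWalk : V → V → List (MQDart γ) → Prop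
  | nil (u : V) : IsMQWalk u u []
  | cons (δ : MQDart γ) {w : V} {l : List (MQDart γ)} :
      IsMQWalk δ.tgt w l → IsMQWalk δ.src w (δ :: l)

namespace IsMQWalk

theorem append {u v w : V} {a b : List (MQDart γ)} (ha : IsMQWalk u v a)
    (hb : IsMQWalk v w b) : IsMQWalk u w (a ++ b) := by
  induction ha with
  | nil => exact hb
  | cons δ _ ih => exact cons δ (ih hb)

theorem reverse {u w : V} {l : List (MQDart γ)} (h : IsMQWalk u w l) :
    IsMQWalk w u (l.reverse.map MQDart.symm) := by
  induction h with
  | nil u => exact nil u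
  | cons δ _ ih =>
    rw [List.reverse_cons, List.map_append]
    exact ih.append (cons δ.symm (nil _))

theorem exists_of_eqvGen {u w : V} (h : Relation.EqvGen (MQAdj γ) u w) :
    ∃ l : List (MQDart γ), IsMQWalk u w l := by
  induction h with
  | rel v w hvw =>
    obtain ⟨hne, e, hv, hw⟩ := hvw
    exact ⟨_, cons ⟨e, v, w, hne, hv, hw⟩ (nil w)⟩
  | refl v => exact ⟨[], nil v⟩
  | symm _ _ _ ih =>
    obtain ⟨l, hl⟩ := ih
    exact ⟨_, hl.reverse⟩
  | trans _ _ _ _ _ ih₁ ih₂ =>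
    obtain ⟨l₁, h₁⟩ := ih₁
    obtain ⟨l₂, h₂⟩ := ih₂
    exact ⟨_, h₁.append h₂⟩

theorem eqvGen_of_mem {u w x : V} {l : List (MQDart γ)} (h : IsMQWalk u w l)
    (hx : x ∈ l.map MQDart.src ++ [w]) : Relation.EqvGen (MQAdj γ) u x := by
  induction h with
  | nil u =>
    obtain rfl : x = u := by simpa using hx
    exact .refl _
  | cons δ _ ih =>
    rcases List.mem_cons.mp hx with rfl | hx
    · exact .refl _
    · exact .trans _ _ _ (.rel _ _ δ.adj) (ih hx)

theorem eq_of_nil {u w : V} (h : IsMQWalk (γ := γ) u w []) : u = w := by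
  cases h
  rfl

theorem src_eq_of_cons {u w : V} {δ : MQDart γ} {l : List (MQDart γ)}
    (h : IsMQWalk u w (δ :: l)) : δ.src = u := by
  cases h
  rfl

theorem of_cons {u w : V} {δ : MQDart γ} {l : List (MQDart γ)}
    (h : IsMQWalk u w (δ :: l)) : IsMQWalk δ.tgt w l := by
  cases h
  assumption

theorem mem_src_append {u w : V} {l : List (MQDart γ)} (h : IsMQWalk u w l) :
    u ∈ l.map MQDart.src ++ [w] := by
  cases h <;> simp

theorem exists_eq_append {u w x : V} {l : List (MQDart γ)} (h : IsMQWalk u w l)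
    (hx : x ∈ l.map MQDart.src ++ [w]) :
    ∃ a b, l = a ++ b ∧ IsMQWalk u x a ∧ IsMQWalk x w b := by
  induction h with
  | nil u =>
    obtain rfl : x = u := by simpa using hx
    exact ⟨[], [], rfl, nil _, nil _⟩
  | cons δ hl ih =>
    rcases List.mem_cons.mp hx with rfl | hx
    · exact ⟨[], _, rfl, nil _, cons δ hl⟩
    · obtain ⟨a, b, rfl, ha, hb⟩ := ih hx
      exact ⟨δ :: a, b, rfl, cons δ ha, hb⟩

theorem src_getElem_succ {u w : V} {l : List (MQDart γ)} (h : IsMQWalk u w l) :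
    ∀ (k : ℕ) (hk : k + 1 < l.length), l[k + 1].src = l[k].tgt := by
  induction h with
  | nil => intro k hk; simp at hk
  | cons δ hl ih =>
    rintro (_ | k) hk
    · obtain ⟨δ', l', rfl⟩ := List.exists_cons_of_length_pos (by simp at hk; omega)
      exact hl.src_eq_of_cons
    · exact ih k (by simpa using hk)

theorem tgt_getLast {u w : V} {l : List (MQDart γ)} (h : IsMQWalk u w l) (hl : l ≠ []) :
    (l.getLast hl).tgt = w := by
  induction h with
  | nil => exact absurd rfl hl
  | @cons δ w l hl' ih =>
    by_cases hne : l = []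
    · subst hne
      exact hl'.eq_of_nil
    · rw [List.getLast_cons hne]
      exact ih hne

theorem src_getElem_val_add_one {u : V} {l : List (MQDart γ)} (h : IsMQWalk u u l)
    [NeZero l.length] (hl : 2 ≤ l.length) (i : ZMod l.length) :
    (l[(i + 1).val]'(ZMod.val_lt _)).src = (l[i.val]'(ZMod.val_lt _)).tgt := by
  have : Fact (1 < l.length) := ⟨hl⟩
  have hval : (i + 1).val = (i.val + 1) % l.length := by rw [ZMod.val_add, ZMod.val_one]
  rcases Nat.lt_or_ge (i.val + 1) l.length with hi | hi
  · simp only [hval, Nat.mod_eq_of_lt hi]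
    exact h.src_getElem_succ _ hi
  · have hi' : i.val = l.length - 1 := by have := ZMod.val_lt i; omega
    have h0 : (i + 1).val = 0 := by rw [hval, hi', Nat.sub_add_cancel (by omega), Nat.mod_self]
    obtain ⟨δ, l', rfl⟩ := List.exists_cons_of_length_pos (by omega : 0 < l.length)
    have hlast := h.tgt_getLast (List.cons_ne_nil _ _)
    rw [List.getLast_eq_getElem] at hlast
    simp only [h0, hi', List.getElem_cons_zero, h.src_eq_of_cons, hlast]

end IsMQWalk

end Walks

section Cycles

variable {V E : Type*} {γ : E → V → ℤ}

theorem ZMod.self_ne_add_one_of_two_le {n : ℕ} (hn : 2 ≤ n) (i : ZMod n) : i ≠ i + 1 := by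
  have : Fact (1 < n) := ⟨hn⟩
  simp

theorem ZMod.prod_getElem_val {α M : Type*} [CommMonoid M] (l : List α) [NeZero l.length]
    (g : α → M) : ∏ i : ZMod l.length, g (l[i.val]'(ZMod.val_lt i)) = (l.map g).prod := by
  rw [← Fin.prod_univ_fun_getElem]
  refine Fintype.prod_bijective (fun i => ⟨i.val, ZMod.val_lt i⟩) ?_ _ _ fun _ => rfl
  refine (Fintype.bijective_iff_injective_and_card _).2 ⟨fun i j hij => ?_, by simp⟩
  exact ZMod.val_injective _ (Fin.mk.inj hij)

theorem MQDart.prod_weight_eq_one {l : List (MQDart γ)}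
    (h : (l.map fun δ => (γ δ.edge δ.src).natAbs).prod =
      (l.map fun δ => (γ δ.edge δ.tgt).natAbs).prod) :
    (l.map weight).prod = 1 := by
  have hne : ((l.map fun δ => (γ δ.edge δ.tgt).natAbs).prod : ℚ) ≠ 0 := by
    simp [Nat.cast_list_prod, List.prod_eq_zero_iff, MQDart.ne_zero_tgt]
  have hsrc : ((l.map fun δ => (γ δ.edge δ.src).natAbs).prod : ℚ) =
      (l.map weight).prod * (l.map fun δ => (γ δ.edge δ.tgt).natAbs).prod := by
    simp only [Nat.cast_list_prod, List.map_map, ← List.prod_map_mul]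
    congr 1
    refine List.map_congr_left fun δ _ => ?_
    simp [weight, δ.ne_zero_tgt]
  rw [h] at hsrc
  exact (mul_eq_right₀ hne).1 hsrc.symm

/-- A closed walk through distinct vertices is a cycle unless it uses some edge twice, which
forces `n = 2`: the walk goes back and forth along one edge. -/
theorem prod_natAbs_eq_of_injective (hM : CondM γ) {n : ℕ} [NeZero n] (hn : 2 ≤ n)
    {v : ZMod n → V} {e : ZMod n → E} (hv : Function.Injective v)
    (h1 : ∀ i, γ (e i) (v i) ≠ 0) (h2 : ∀ i, γ (e i) (v (i + 1)) ≠ 0)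
    (hcycle : ∀ he : Function.Injective e, (MQCycle.mk n hn v e hv he h1 h2).Balanced) :
    ∏ i, (γ (e i) (v i)).natAbs = ∏ i, (γ (e i) (v (i + 1))).natAbs := by
  by_cases he : Function.Injective e
  · exact hcycle he
  obtain ⟨i, j, hij, hne⟩ : ∃ i j, e i = e j ∧ i ≠ j := by
    simpa [Function.Injective] using he
  have hstep : ∀ k, v k ≠ v (k + 1) := fun k h =>
    ZMod.self_ne_add_one_of_two_le hn k (hv h)
  have hj : j = i + 1 := by
    rcases hM.eq_or_eq_of_ne_zero (h1 i) (h2 i) (hstep i) (hij ▸ h1 j) with h | h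
    · exact absurd (hv h).symm hne
    · exact hv h
  have hi : j + 1 = i := by
    rcases hM.eq_or_eq_of_ne_zero (h1 i) (h2 i) (hstep i) (hij ▸ h2 j) with h | h
    · exact hv h
    · exact absurd (add_right_cancel (hv h)).symm hne
  have hn2 : n = 2 := by
    have h2 : ((2 : ℕ) : ZMod n) = 0 := by
      push_cast
      linear_combination hi - hj
    exact le_antisymm (Nat.le_of_dvd two_pos ((ZMod.natCast_eq_zero_iff 2 n).1 h2)) hn
  subst hn2
  have hconst : ∀ k, e k = e i := by
    intro k
    rcases (by decide : ∀ a b : ZMod 2, a = b ∨ a = b + 1) k i with rfl | rfl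
    · rfl
    · rw [← hj, hij]
  simp only [hconst]
  exact (Fintype.prod_equiv (Equiv.addRight 1) _ _ fun _ => rfl).symm

theorem IsMQWalk.prod_weight_eq_one_of_nodup (hM : CondM γ) {u : V} {l : List (MQDart γ)}
    (h : IsMQWalk u u l) (hnd : (l.map MQDart.src).Nodup)
    (hbal : ∀ c : MQCycle γ, (∀ i, c.v i ∈ l.map MQDart.src) → c.Balanced) :
    (l.map MQDart.weight).prod = 1 := by
  rcases Nat.lt_or_ge l.length 2 with hl | hl
  · rcases l with _ | ⟨δ, _ | ⟨δ', l⟩⟩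
    · rfl
    · exact absurd (h.src_eq_of_cons.trans h.of_cons.eq_of_nil.symm) δ.src_ne_tgt
    · simp at hl
  have : NeZero l.length := ⟨by omega⟩
  let d : ZMod l.length → MQDart γ := fun i => l[i.val]'(ZMod.val_lt i)
  let v : ZMod l.length → V := fun i => (d i).src
  have hsucc : ∀ i, v (i + 1) = (d i).tgt := h.src_getElem_val_add_one hl
  have hv : Function.Injective v := fun i j hij =>
    ZMod.val_injective _ ((hnd.getElem_inj_iff (hi := by simp [ZMod.val_lt])
      (hj := by simp [ZMod.val_lt])).1 (by simpa using hij))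
  have hprod := prod_natAbs_eq_of_injective hM hl hv (fun i => (d i).ne_zero_src)
    (fun i => hsucc i ▸ (d i).ne_zero_tgt)
    (fun _ => hbal _ fun i => List.mem_map_of_mem (List.getElem_mem _))
  simp only [hsucc, v, d,
    ZMod.prod_getElem_val l fun δ : MQDart γ => (γ δ.edge δ.src).natAbs,
    ZMod.prod_getElem_val l fun δ : MQDart γ => (γ δ.edge δ.tgt).natAbs] at hprod
  exact MQDart.prod_weight_eq_one hprod

end Cycles

section Equilibrium

variable {V E : Type*} {γ : E → V → ℤ}

def CyclesBalanced (γ : E → V → ℤ) (C : Quotient (mqSetoid γ)) : Prop :=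
  ∀ c : MQCycle γ, (∀ i, Quotient.mk (mqSetoid γ) (c.v i) = C) → c.Balanced

/-- Loop erasure: cutting off closed subwalks, which are balanced, does not change the ratio. -/
theorem IsMQWalk.exists_nodup_prod_weight_eq (hM : CondM γ) {C : Quotient (mqSetoid γ)}
    (hbal : CyclesBalanced γ C) {u w : V} {l : List (MQDart γ)} (h : IsMQWalk u w l)
    (hu : Quotient.mk (mqSetoid γ) u = C) :
    ∃ q : List (MQDart γ), IsMQWalk u w q ∧ (q.map MQDart.src ++ [w]).Nodup ∧
      (q.map MQDart.weight).prod = (l.map MQDart.weight).prod := by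
  induction h with
  | nil u => exact ⟨[], .nil u, by simp, rfl⟩
  | @cons δ w l hl ih =>
    obtain ⟨q, hq, hnd, hprod⟩ :=
      ih (hu ▸ (Quotient.sound (Relation.EqvGen.rel _ _ δ.adj)).symm)
    by_cases hmem : δ.src ∈ q.map MQDart.src ++ [w]
    · obtain ⟨a, b, rfl, ha, hb⟩ := hq.exists_eq_append hmem
      rw [List.map_append, List.append_assoc] at hnd
      have hcycle : ((δ :: a).map MQDart.weight).prod = 1 := by
        refine (IsMQWalk.cons δ ha).prod_weight_eq_one_of_nodup hM ?_
          fun c hc => hbal c fun i => ?_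
        · exact List.nodup_cons.2
            ⟨fun h => List.disjoint_of_nodup_append hnd h hb.mem_src_append, hnd.of_append_left⟩
        · rw [← hu]
          exact (Quotient.sound ((IsMQWalk.cons δ ha).eqvGen_of_mem
            (List.mem_append_left _ (hc i)))).symm
      refine ⟨b, hb, hnd.of_append_right, ?_⟩
      simp only [List.map_cons, List.prod_cons, List.map_append, List.prod_append]
        at hcycle hprod ⊢
      rw [← hprod, ← mul_assoc, hcycle, one_mul]
    · refine ⟨δ :: q, .cons δ hq, List.nodup_cons.2 ⟨hmem, hnd⟩, ?_⟩
      simp [hprod]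

theorem IsMQWalk.prod_weight_eq_one (hM : CondM γ) {C : Quotient (mqSetoid γ)}
    (hbal : CyclesBalanced γ C) {u : V} {l : List (MQDart γ)} (h : IsMQWalk u u l)
    (hu : Quotient.mk (mqSetoid γ) u = C) :
    (l.map MQDart.weight).prod = 1 := by
  obtain ⟨q, hq, hnd, hprod⟩ := h.exists_nodup_prod_weight_eq hM hbal hu
  rw [← hprod]
  rcases q with _ | ⟨δ, q⟩
  · rfl
  · obtain rfl := hq.src_eq_of_cons
    simp at hnd

open Classical in
/-- The walk from `C.out` is chosen arbitrarily; when every cycle in `C` is balanced, the value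
does not depend on the choice (`mqPotential_eq`). -/
noncomputable def mqPotential (γ : E → V → ℤ) (C : Quotient (mqSetoid γ)) (w : V) : ℚ :=
  if h : ∃ l : List (MQDart γ), IsMQWalk C.out w l then (h.choose.map MQDart.weight).prod
  else 0

theorem mqPotential_eq (hM : CondM γ) {C : Quotient (mqSetoid γ)}
    (hbal : CyclesBalanced γ C) {w : V} {l : List (MQDart γ)} (h : IsMQWalk C.out w l) :
    mqPotential γ C w = (l.map MQDart.weight).prod := by
  have hex : ∃ l : List (MQDart γ), IsMQWalk C.out w l := ⟨l, h⟩
  rw [mqPotential, dif_pos hex]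
  have hclosed := (hex.choose_spec.append h.reverse).prod_weight_eq_one hM hbal
    (Quotient.out_eq C)
  rw [List.map_append, List.prod_append, MQDart.prod_weight_reverse_symm] at hclosed
  exact mul_inv_eq_one₀ (by simp [List.prod_eq_zero_iff, MQDart.weight, MQDart.ne_zero_src,
    MQDart.ne_zero_tgt]) |>.1 hclosed

end Equilibrium

section Kernel

variable {V E : Type*} {γ : E → V → ℤ}

theorem mqPotential_eq_zero {C : Quotient (mqSetoid γ)} {w : V}
    (hw : Quotient.mk (mqSetoid γ) w ≠ C) : mqPotential γ C w = 0 := by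
  refine dif_neg fun ⟨l, hl⟩ => hw ?_
  rw [← Quotient.out_eq C]
  exact (Quotient.sound (hl.eqvGen_of_mem (by simp))).symm

theorem mqPotential_out (hM : CondM γ) {C : Quotient (mqSetoid γ)} (hbal : CyclesBalanced γ C) :
    mqPotential γ C C.out = 1 :=
  mqPotential_eq hM hbal (.nil _)

theorem mqPotential_tgt (hM : CondM γ) {C : Quotient (mqSetoid γ)}
    (hbal : CyclesBalanced γ C) (δ : MQDart γ) :
    mqPotential γ C δ.tgt = δ.weight * mqPotential γ C δ.src := by
  by_cases hsrc : ∃ l : List (MQDart γ), IsMQWalk C.out δ.src l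
  · obtain ⟨l, hl⟩ := hsrc
    rw [mqPotential_eq hM hbal hl, mqPotential_eq hM hbal (hl.append (.cons δ (.nil _)))]
    simp [mul_comm]
  · have htgt : ¬ ∃ l : List (MQDart γ), IsMQWalk C.out δ.tgt l := fun ⟨l, hl⟩ =>
      hsrc ⟨_, hl.append (.cons δ.symm (.nil _))⟩
    rw [mqPotential, mqPotential, dif_neg hsrc, dif_neg htgt, mul_zero]

variable [Fintype V]

theorem mqPotential_mem_kerGamma (hM : CondM γ) {C : Quotient (mqSetoid γ)}
    (hC : InEquilibrium γ C) : mqPotential γ C ∈ kerGamma γ := by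
  refine (mem_kerGamma_iff hM).2 ⟨fun e v hv hleaf => ?_, mqPotential_tgt hM hC.2⟩
  refine mqPotential_eq_zero fun hvC => hC.1 e ⟨⟨v, hv, hleaf⟩, fun u hu => ?_⟩
  rwa [hleaf u hu]

theorem IsMQWalk.apply_eq_prod_weight_mul (hM : CondM γ) {d : V → ℚ} (hd : d ∈ kerGamma γ)
    {u w : V} {l : List (MQDart γ)} (h : IsMQWalk u w l) :
    d w = (l.map MQDart.weight).prod * d u := by
  induction h with
  | nil => simp
  | cons δ _ ih =>
    rw [ih, List.map_cons, List.prod_cons, ((mem_kerGamma_iff hM).1 hd).2 δ]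
    ring

theorem eq_zero_of_eqvGen (hM : CondM γ) {d : V → ℚ} (hd : d ∈ kerGamma γ) {u w : V}
    (hu : d u = 0) (huw : Relation.EqvGen (MQAdj γ) u w) : d w = 0 := by
  obtain ⟨l, hl⟩ := IsMQWalk.exists_of_eqvGen huw
  rw [hl.apply_eq_prod_weight_mul hM hd, hu, mul_zero]

theorem MQCycle.balanced_of_mem_kerGamma (hM : CondM γ) (c : MQCycle γ) {d : V → ℚ}
    (hd : d ∈ kerGamma γ) (hne : ∀ i, d (c.v i) ≠ 0) : c.Balanced := by
  have : NeZero c.n := ⟨by have := c.hn; omega⟩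
  have hstep : ∀ i, |(γ (c.e i) (c.v i) : ℚ)| * d (c.v i) =
      |(γ (c.e i) (c.v (i + 1)) : ℚ)| * d (c.v (i + 1)) := fun i => by
    have hdart := ((mem_kerGamma_iff hM).1 hd).2
      ⟨c.e i, c.v i, c.v (i + 1), fun h => ZMod.self_ne_add_one_of_two_le c.hn i (c.hv h),
        c.h1 i, c.h2 i⟩
    simp only [MQDart.weight] at hdart
    rw [hdart, div_mul_eq_mul_div, mul_div_cancel₀ _ (by simpa using c.h2 i)]
  have hshift : ∏ i, d (c.v (i + 1)) = ∏ i, d (c.v i) :=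
    Fintype.prod_equiv (Equiv.addRight 1) _ _ fun _ => rfl
  have hprod := Finset.prod_congr rfl fun i (_ : i ∈ Finset.univ) => hstep i
  rw [Finset.prod_mul_distrib, Finset.prod_mul_distrib, hshift] at hprod
  have := mul_right_cancel₀ (Finset.prod_ne_zero_iff.2 fun i _ => hne i) hprod
  refine Nat.cast_injective (R := ℚ) ?_
  simpa [Nat.cast_natAbs] using this

theorem eq_zero_of_not_inEquilibrium (hM : CondM γ) {d : V → ℚ} (hd : d ∈ kerGamma γ)
    {C : Quotient (mqSetoid γ)} (hC : ¬ InEquilibrium γ C) {w : V}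
    (hw : Quotient.mk (mqSetoid γ) w = C) : d w = 0 := by
  obtain ⟨u, hu, huw⟩ : ∃ u, d u = 0 ∧ Quotient.mk (mqSetoid γ) u = C := by
    simp only [InEquilibrium, not_and_or, not_forall, not_not] at hC
    rcases hC with ⟨e, ⟨v, hv, hleaf⟩, hvC⟩ | ⟨c, hcC, hc⟩
    · exact ⟨v, ((mem_kerGamma_iff hM).1 hd).1 e v hv hleaf, hvC v hv⟩
    · by_contra! h
      exact hc (c.balanced_of_mem_kerGamma hM hd fun i hi => h _ hi (hcC i))
  exact eq_zero_of_eqvGen hM hd hu (Quotient.exact (huw.trans hw.symm))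

theorem eq_zero_of_forall_apply_out_eq_zero (hM : CondM γ) {d : V → ℚ} (hd : d ∈ kerGamma γ)
    (h : ∀ C, InEquilibrium γ C → d C.out = 0) : d = 0 := by
  funext w
  by_cases hC : InEquilibrium γ (Quotient.mk (mqSetoid γ) w)
  · exact eq_zero_of_eqvGen hM hd (h _ hC)
      (Quotient.exact (Quotient.out_eq (Quotient.mk (mqSetoid γ) w)))
  · exact eq_zero_of_not_inEquilibrium hM hd hC rfl

end Kernel

theorem finrank_kerGamma_eq_card_equilibrium {V E : Type*} [Fintype V]
    (γ : E → V → ℤ) (hM : CondM γ) :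
    Module.finrank ℚ (kerGamma γ) =
      Nat.card {C : Quotient (mqSetoid γ) // InEquilibrium γ C} := by
  classical
  let ι := {C : Quotient (mqSetoid γ) // InEquilibrium γ C}
  let T : kerGamma γ →ₗ[ℚ] ι → ℚ :=
    (LinearMap.pi fun C : ι => LinearMap.proj C.1.out) ∘ₗ (kerGamma γ).subtype
  have hinj : Function.Injective T := by
    refine (injective_iff_map_eq_zero T).2 fun d hd => Subtype.ext ?_
    exact eq_zero_of_forall_apply_out_eq_zero hM d.2 fun C hC => congrFun hd ⟨C, hC⟩
  have hsurj : Function.Surjective T := fun f => by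
    refine ⟨⟨∑ C : ι, f C • mqPotential γ C.1, Submodule.sum_mem _ fun C _ =>
      Submodule.smul_mem _ _ (mqPotential_mem_kerGamma hM C.2)⟩, funext fun C => ?_⟩
    simp only [T, LinearMap.coe_comp, Function.comp_apply, Submodule.coe_subtype,
      LinearMap.pi_apply, LinearMap.proj_apply, Finset.sum_apply, Pi.smul_apply, smul_eq_mul]
    rw [Finset.sum_eq_single C (fun C' _ hne => ?_) (by simp), mqPotential_out hM C.2.2, mul_one]
    rw [mqPotential_eq_zero (by rw [Quotient.out_eq]; exact fun h => hne (Subtype.ext h.symm)),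
      mul_zero]
  rw [(LinearEquiv.ofBijective T ⟨hinj, hsurj⟩).finrank_eq, Module.finrank_fintype_fun_eq_card,
    Nat.card_eq_fintype_card]
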